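/- arXiv:2205.06852 — 2 statements merged into one kernel-verified Lean document; each statement's English description precedes it below -/
import Mathlib

section
/- Let f : M → M be a continuous map of a compact metric space M. Then f has the shadowing property if and only if every point of M is shadowable (i.e., for every y ∈ M and every ε > 0 there exists δ > 0 such that every δ-pseudo-orbit starting at y is ε-shadowed by a true orbit). -/
/-!
Shadowability of a point is an open condition with a locally uniform `δ`: if `y` is shadowable,
a pseudo-orbit starting near `y` becomes, after its first point is moved to `y`, a slightly coarser
pseudo-orbit from `y`, and a shadow of the latter also shadows the original. Compactness then turns
these locally uniform `δ`s into a single one.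
-/

open Filter Topology Function

section

variable {X : Type*}

theorem CompactSpace.exists_pos_forall_of_antitone [TopologicalSpace X] [CompactSpace X]
    {P : ℝ → X → Prop} (hP : ∀ a, Antitone (P · a)) (h : ∀ y, ∃ δ > 0, ∀ᶠ a in 𝓝 y, P δ a) :
    ∃ δ > 0, ∀ a, P δ a := by
  have hlocal : ∀ y ∈ (Set.univ : Set X), ∀ᶠ z : ℝ × X in 𝓝 (0, y), P z.1 z.2 := by
    intro y _
    obtain ⟨δ, hδ, hy⟩ := h y
    rw [nhds_prod_eq]
    exact ((gt_mem_nhds hδ).prod_mk hy).mono fun z hz => hP z.2 hz.1.le hz.2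
  have hnear := isCompact_univ.eventually_forall_of_forall_eventually hlocal
  obtain ⟨δ, hδ, hδpos⟩ :=
    ((hnear.filter_mono nhdsWithin_le_nhds).and (self_mem_nhdsWithin (s := Set.Ioi 0))).exists
  exact ⟨δ, hδpos, fun a => hδ a trivial⟩

variable [PseudoMetricSpace X] (f : X → X)

def IsPseudoOrbit (δ : ℝ) (x : ℕ → X) : Prop :=
  ∀ j, dist (f (x j)) (x (j + 1)) ≤ δ

def IsShadowed (ε : ℝ) (x : ℕ → X) : Prop :=
  ∃ z, ∀ j, dist (f^[j] z) (x j) < ε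

def HasShadowing : Prop :=
  ∀ ε > 0, ∃ δ > 0, ∀ x, IsPseudoOrbit f δ x → IsShadowed f ε x

def IsShadowable (y : X) : Prop :=
  ∀ ε > 0, ∃ δ > 0, ∀ x, x 0 = y → IsPseudoOrbit f δ x → IsShadowed f ε x

variable {f}

theorem IsPseudoOrbit.mono {δ δ' : ℝ} {x : ℕ → X} (hx : IsPseudoOrbit f δ x) (hδ : δ ≤ δ') :
    IsPseudoOrbit f δ' x :=
  fun j => (hx j).trans hδ

theorem IsPseudoOrbit.update_zero {δ₁ δ₂ : ℝ} {x : ℕ → X} {a : X} (hx : IsPseudoOrbit f δ₂ x)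
    (ha : dist (f a) (f (x 0)) ≤ δ₁) : IsPseudoOrbit f (δ₁ + δ₂) (update x 0 a) := by
  rintro (_ | j)
  · simpa using (dist_triangle _ _ _).trans (add_le_add ha (hx 0))
  · simpa using (hx (j + 1)).trans (le_add_of_nonneg_left (dist_nonneg.trans ha))

theorem IsShadowed.of_update_zero {ε₁ ε₂ : ℝ} {x : ℕ → X} {a : X}
    (hx : IsShadowed f ε₁ (update x 0 a)) (ha : dist a (x 0) < ε₂) : IsShadowed f (ε₁ + ε₂) x := by
  obtain ⟨z, hz⟩ := hx
  refine ⟨z, ?_⟩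
  rintro (_ | j)
  · simpa using (dist_triangle _ a _).trans_lt (add_lt_add (by simpa using hz 0) ha)
  · simpa using (hz (j + 1)).trans_le (le_add_of_nonneg_right (dist_nonneg.trans ha.le))

theorem HasShadowing.isShadowable (h : HasShadowing f) (y : X) : IsShadowable f y := by
  intro ε hε
  obtain ⟨δ, hδ, H⟩ := h ε hε
  exact ⟨δ, hδ, fun x _ => H x⟩

theorem IsShadowable.eventually_isShadowed (hf : Continuous f) {y : X} (hy : IsShadowable f y)
    {ε : ℝ} (hε : 0 < ε) :
    ∃ δ > 0, ∀ᶠ a in 𝓝 y, ∀ x, x 0 = a → IsPseudoOrbit f δ x → IsShadowed f ε x := by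
  obtain ⟨η, hη, H⟩ := hy (ε / 2) (half_pos hε)
  refine ⟨η / 2, half_pos hη, ?_⟩
  have hf_near : ∀ᶠ a in 𝓝 y, dist (f a) (f y) < η / 2 :=
    (hf.tendsto y).eventually (Metric.ball_mem_nhds _ (half_pos hη))
  filter_upwards [hf_near, Metric.ball_mem_nhds y (half_pos hε)] with a hfa ha
  rintro x rfl hx
  have hmoved : IsPseudoOrbit f (η / 2 + η / 2) (update x 0 y) :=
    hx.update_zero (by rw [dist_comm]; exact hfa.le)
  rw [add_halves] at hmoved
  have := (H _ (update_self ..) hmoved).of_update_zero (by rwa [dist_comm] : dist y (x 0) < ε / 2)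
  rwa [add_halves] at this

theorem hasShadowing_iff_forall_isShadowable [CompactSpace X] (hf : Continuous f) :
    HasShadowing f ↔ ∀ y, IsShadowable f y := by
  refine ⟨HasShadowing.isShadowable, fun h ε hε => ?_⟩
  have hanti : ∀ a, Antitone fun δ => ∀ x, x 0 = a → IsPseudoOrbit f δ x → IsShadowed f ε x :=
    fun a _ _ hδ H x hx0 hx => H x hx0 (hx.mono hδ)
  obtain ⟨δ, hδ, H⟩ := CompactSpace.exists_pos_forall_of_antitone hanti
    fun y => (h y).eventually_isShadowed hf hε
  exact ⟨δ, hδ, fun x => H (x 0) x rfl⟩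

end

/-- Shadowing iff every point is shadowable (Lemma on shadowable points). -/
theorem shadowing_iff_every_point_shadowable
    {M : Type*} [MetricSpace M] [CompactSpace M]
    (f : M → M) (hf : Continuous f) :
    (∀ ε > (0 : ℝ), ∃ δ > (0 : ℝ), ∀ x : ℕ → M,
        (∀ j, dist (f (x j)) (x (j + 1)) ≤ δ) →
        ∃ z : M, ∀ j, dist (f^[j] z) (x j) < ε)
    ↔
    (∀ y : M, ∀ ε > (0 : ℝ), ∃ δ > (0 : ℝ), ∀ x : ℕ → M, x 0 = y →
        (∀ j, dist (f (x j)) (x (j + 1)) ≤ δ) →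
        ∃ z : M, ∀ j, dist (f^[j] z) (x j) < ε) :=
  hasShadowing_iff_forall_isShadowable hf
end

section
/- If every point of a compact metric space M is shadowable for a continuous map f : M → M, then there is a uniform choice: for every ε > 0 there exists δ > 0 (independent of the starting point) such that every δ-pseudo-orbit of f is ε-shadowed. -/
/-!
A point `y` close to a shadowable point `w` inherits the shadowing property from `w`: replacing
the first point of a pseudo-orbit from `y` by `w` still gives a pseudo-orbit (by continuity of `f`
at `w`), and a shadow of the modified orbit shadows the original one up to `dist w y`.
So shadowing holds uniformly for `(δ, y)` near `(0, w)`, and compactness of `M` (a finite subcover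
of these neighbourhoods) makes it uniform in the starting point.
-/

open Filter Topology

namespace Shadowing

variable {M : Type*} [MetricSpace M]

def IsPseudoOrbit (f : M → M) (δ : ℝ) (x : ℕ → M) : Prop :=
  ∀ j, dist (f (x j)) (x (j + 1)) ≤ δ

def IsShadowed (f : M → M) (ε : ℝ) (x : ℕ → M) : Prop :=
  ∃ z : M, ∀ j, dist (f^[j] z) (x j) < ε

def ShadowsFrom (f : M → M) (ε δ : ℝ) (y : M) : Prop :=
  ∀ x : ℕ → M, x 0 = y → IsPseudoOrbit f δ x → IsShadowed f ε x

variable {f : M → M} {x : ℕ → M} {w : M} {ε δ : ℝ}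

theorem IsShadowed.mono {ε' : ℝ} (hx : IsShadowed f ε x) (hε : ε ≤ ε') : IsShadowed f ε' x :=
  let ⟨z, hz⟩ := hx
  ⟨z, fun j => (hz j).trans_le hε⟩

theorem IsPseudoOrbit.update_zero (hx : IsPseudoOrbit f δ x) :
    IsPseudoOrbit f (δ + dist (f w) (f (x 0))) (Function.update x 0 w) := by
  rintro (_ | j)
  · calc dist (f w) (x 1) ≤ dist (f w) (f (x 0)) + dist (f (x 0)) (x 1) := dist_triangle _ _ _
      _ ≤ δ + dist (f w) (f (x 0)) := by linarith [hx 0]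
  · simpa using (hx (j + 1)).trans (le_add_of_nonneg_right dist_nonneg)

theorem IsShadowed.of_update_zero (hx : IsShadowed f ε (Function.update x 0 w)) :
    IsShadowed f (ε + dist w (x 0)) x := by
  obtain ⟨z, hz⟩ := hx
  refine ⟨z, ?_⟩
  rintro (_ | j)
  · calc dist z (x 0) ≤ dist z w + dist w (x 0) := dist_triangle _ _ _
      _ < ε + dist w (x 0) := by simpa using hz 0
  · simpa using (hz (j + 1)).trans_le (le_add_of_nonneg_right dist_nonneg)

theorem ShadowsFrom.of_dist_le {y : M} {δ' : ℝ} (hw : ShadowsFrom f ε δ w)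
    (hδ : δ' + dist (f w) (f y) ≤ δ) : ShadowsFrom f (ε + dist w y) δ' y := by
  rintro x rfl hx
  refine (hw _ (Function.update_self 0 w x) ?_).of_update_zero
  exact fun j => (hx.update_zero j).trans hδ

theorem eventually_shadowsFrom (hf : ContinuousAt f w)
    (hw : ∀ ε > (0 : ℝ), ∃ δ > (0 : ℝ), ShadowsFrom f ε δ w) (hε : 0 < ε) :
    ∀ᶠ p : ℝ × M in 𝓝 (0, w), ShadowsFrom f ε p.1 p.2 := by
  obtain ⟨δ, hδ, hshadow⟩ := hw (ε / 2) (half_pos hε)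
  have hnear : ∀ᶠ y in 𝓝 w, dist w y < ε / 2 ∧ dist (f w) (f y) < δ / 2 := by
    have hfy := hf.eventually (Metric.ball_mem_nhds (f w) (half_pos hδ))
    filter_upwards [Metric.ball_mem_nhds w (half_pos hε), hfy] with y hy hfy
    exact ⟨dist_comm w y ▸ hy, dist_comm (f w) (f y) ▸ hfy⟩
  rw [nhds_prod_eq]
  filter_upwards [(eventually_lt_nhds (half_pos hδ)).prod_mk hnear]
  rintro ⟨δ', y⟩ ⟨hδ', hy, hfy⟩ x hx0 hx
  exact (hshadow.of_dist_le (by linarith) x hx0 hx).mono (by linarith)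

end Shadowing

open Shadowing in
/-- If every point is shadowable then the choice of δ can be made uniform. -/
theorem uniform_shadowing_of_pointwise_shadowable
    {M : Type*} [MetricSpace M] [CompactSpace M]
    (f : M → M) (hf : Continuous f)
    (h : ∀ y : M, ∀ ε > (0 : ℝ), ∃ δ > (0 : ℝ), ∀ x : ℕ → M, x 0 = y →
        (∀ j, dist (f (x j)) (x (j + 1)) ≤ δ) →
        ∃ z : M, ∀ j, dist (f^[j] z) (x j) < ε) :
    ∀ ε > (0 : ℝ), ∃ δ > (0 : ℝ), ∀ x : ℕ → M,
      (∀ j, dist (f (x j)) (x (j + 1)) ≤ δ) →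
      ∃ z : M, ∀ j, dist (f^[j] z) (x j) < ε := by
  intro ε hε
  have huniform : ∀ᶠ δ in 𝓝 (0 : ℝ), ∀ y ∈ Set.univ, ShadowsFrom f ε δ y :=
    isCompact_univ.eventually_forall_of_forall_eventually fun w _ =>
      eventually_shadowsFrom hf.continuousAt (h w) hε
  obtain ⟨δ, hδ, hδpos⟩ := ((huniform.filter_mono nhdsWithin_le_nhds).and
    (self_mem_nhdsWithin : Set.Ioi (0 : ℝ) ∈ 𝓝[>] 0)).exists
  exact ⟨δ, hδpos, fun x hx => hδ (x 0) trivial x rfl hx⟩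
end
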